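/- Let G = (V,E) be a finite simple permutation graph and v a vertex of G. Then G*v is a permutation graph. -/

import Mathlib

/-!
Realise `G` by two linear orders and cut both of them at `v`, swapping the piece above `v` with
the piece below it. This reverses the order between `v` and every other vertex, so adjacency to `v`
is unchanged; between `u, w ≠ v` it reverses the order exactly when `u` and `w` lie on different
sides of `v`. So the adjacency of `u` and `w` flips iff their sides disagree in exactly one of the
two orders, i.e. iff exactly one of `u`, `w` is a neighbour of `v`: this is the Seidel complement.
-/

universe u

/-- The Seidel complement of `G` at `v`: adjacency between the open neighborhood of `v`
and the set of vertices different from `v` and not adjacent to `v` is complemented,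
all other adjacencies are unchanged. -/
def seidelCompl {V : Type u} (G : SimpleGraph V) (v : V) : SimpleGraph V where
  Adj x y := x ≠ y ∧
    Xor' (G.Adj x y)
      ((G.Adj v x ∧ ¬ G.Adj v y ∧ y ≠ v) ∨ (G.Adj v y ∧ ¬ G.Adj v x ∧ x ≠ v))
  symm := ⟨by
    rintro x y ⟨hxy, h⟩
    refine ⟨hxy.symm, ?_⟩
    have h1 : G.Adj x y ↔ G.Adj y x := G.adj_comm x y
    unfold Xor' at h ⊢
    rw [xor_def] at h ⊢
    tauto⟩
  loopless := ⟨fun x h => h.1 rfl⟩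

/-- A permutation graph: there are two linear orders on the vertices such that two
distinct vertices are adjacent iff the two orders disagree on them. -/
def IsPermutationGraph {V : Type u} (G : SimpleGraph V) : Prop :=
  ∃ O₁ O₂ : LinearOrder V, ∀ u w : V, u ≠ w →
    (G.Adj u w ↔ ((O₁.lt u w ∧ O₂.lt w u) ∨ (O₁.lt w u ∧ O₂.lt u w)))
theorem xor_xor_xor_comm (a b c d : Prop) : Xor (Xor a b) (Xor c d) ↔ Xor (Xor a c) (Xor b d) := by
  grind

variable {V : Type u}

namespace LinearOrder

theorem lt_iff_not_lt_of_ne (O : LinearOrder V) {u w : V} (huw : u ≠ w) :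
    O.lt u w ↔ ¬ O.lt w u :=
  let := O; ⟨lt_asymm, huw.lt_or_gt.resolve_right⟩

def cutRank (O : LinearOrder V) (v u : V) : ℕ :=
  if O.lt v u then 0 else if u = v then 1 else 2

/-- `O` cut at `v` with the two pieces swapped: first the elements above `v`, then `v`, then
the elements below `v`, each block ordered by `O`. -/
@[reducible]
def cutSwap (O : LinearOrder V) (v : V) : LinearOrder V :=
  lift' (fun u => toLex (O.cutRank v u, u)) fun _ _ h => congrArg (fun p => (ofLex p).2) h

variable (O : LinearOrder V) (v : V)

theorem cutSwap_lt_iff (u w : V) : (O.cutSwap v).lt u w ↔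
    O.cutRank v u < O.cutRank v w ∨ O.cutRank v u = O.cutRank v w ∧ O.lt u w :=
  let := O; Prod.Lex.lt_iff

theorem cutSwap_lt_left {w : V} (hw : w ≠ v) : (O.cutSwap v).lt v w ↔ O.lt w v := by
  let := O
  rw [cutSwap_lt_iff, cutRank, cutRank]
  split_ifs <;> simp_all <;> order

theorem cutSwap_lt_of_ne {u w : V} (hu : u ≠ v) (hw : w ≠ v) :
    (O.cutSwap v).lt u w ↔ Xor (O.lt u w) (Xor (O.lt v u) (O.lt v w)) := by
  let := O
  rw [cutSwap_lt_iff, cutRank, cutRank]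
  split_ifs <;> simp_all [xor_def] <;> order

end LinearOrder

section SeidelCompl

variable (G : SimpleGraph V) (v : V)

theorem seidelCompl_adj {u w : V} : (seidelCompl G v).Adj u w ↔ u ≠ w ∧
    Xor (G.Adj u w) ((G.Adj v u ∧ ¬ G.Adj v w ∧ w ≠ v) ∨ (G.Adj v w ∧ ¬ G.Adj v u ∧ u ≠ v)) :=
  Iff.rfl

theorem seidelCompl_adj_left (w : V) : (seidelCompl G v).Adj v w ↔ G.Adj v w := by
  grind [seidelCompl_adj, G.loopless.irrefl v, G.ne_of_adj]

theorem seidelCompl_adj_of_ne {u w : V} (hu : u ≠ v) (hw : w ≠ v) :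
    (seidelCompl G v).Adj u w ↔ u ≠ w ∧ Xor (G.Adj u w) (Xor (G.Adj v u) (G.Adj v w)) := by
  grind [seidelCompl_adj]

end SeidelCompl

def permutationGraph (O₁ O₂ : LinearOrder V) : SimpleGraph V where
  Adj u w := (O₁.lt u w ∧ O₂.lt w u) ∨ (O₁.lt w u ∧ O₂.lt u w)
  symm := ⟨fun _ _ => Or.symm⟩
  loopless := ⟨fun u h => by let := O₁; simp at h⟩

theorem isPermutationGraph_iff (G : SimpleGraph V) :
    IsPermutationGraph G ↔ ∃ O₁ O₂ : LinearOrder V, G = permutationGraph O₁ O₂ := by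
  refine exists₂_congr fun O₁ O₂ => ⟨fun h => ?_, ?_⟩
  · ext u w
    obtain rfl | huw := eq_or_ne u w
    · simp
    · exact h u w huw
  · rintro rfl u w -
    rfl

theorem permutationGraph_adj_iff_xor (O₁ O₂ : LinearOrder V) {u w : V} (huw : u ≠ w) :
    (permutationGraph O₁ O₂).Adj u w ↔ Xor (O₁.lt u w) (O₂.lt u w) := by
  change (O₁.lt u w ∧ O₂.lt w u) ∨ (O₁.lt w u ∧ O₂.lt u w) ↔ _
  rw [O₁.lt_iff_not_lt_of_ne huw.symm, O₂.lt_iff_not_lt_of_ne huw.symm, xor_def]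
  tauto

theorem seidelCompl_permutationGraph (O₁ O₂ : LinearOrder V) (v : V) :
    seidelCompl (permutationGraph O₁ O₂) v = permutationGraph (O₁.cutSwap v) (O₂.cutSwap v) := by
  have adj_left (w : V) (hw : w ≠ v) : (seidelCompl (permutationGraph O₁ O₂) v).Adj v w ↔
      (permutationGraph (O₁.cutSwap v) (O₂.cutSwap v)).Adj v w := by
    rw [seidelCompl_adj_left, permutationGraph_adj_iff_xor _ _ hw.symm,
      permutationGraph_adj_iff_xor _ _ hw.symm, O₁.cutSwap_lt_left v hw,
      O₂.cutSwap_lt_left v hw, O₁.lt_iff_not_lt_of_ne hw, O₂.lt_iff_not_lt_of_ne hw, xor_not_not]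
  ext u w
  obtain rfl | huw := eq_or_ne u w
  · simp
  obtain rfl | hu := eq_or_ne u v
  · exact adj_left w huw.symm
  obtain rfl | hw := eq_or_ne w v
  · rw [SimpleGraph.adj_comm, SimpleGraph.adj_comm (permutationGraph _ _)]
    exact adj_left u hu
  rw [seidelCompl_adj_of_ne _ _ hu hw, permutationGraph_adj_iff_xor _ _ huw,
    permutationGraph_adj_iff_xor _ _ hu.symm, permutationGraph_adj_iff_xor _ _ hw.symm,
    permutationGraph_adj_iff_xor _ _ huw, O₁.cutSwap_lt_of_ne v hu hw, O₂.cutSwap_lt_of_ne v hu hw,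
    xor_xor_xor_comm (O₁.lt v u), xor_xor_xor_comm (O₁.lt u w)]
  exact and_iff_right huw

theorem isPermutationGraph_seidelCompl_general {V : Type u} (G : SimpleGraph V)
    (hG : IsPermutationGraph G) (v : V) : IsPermutationGraph (seidelCompl G v) := by
  obtain ⟨O₁, O₂, rfl⟩ := (isPermutationGraph_iff G).1 hG
  exact (isPermutationGraph_iff _).2 ⟨_, _, seidelCompl_permutationGraph O₁ O₂ v⟩

/-- Permutation graphs are closed under Seidel complementation. -/
theorem isPermutationGraph_seidelCompl {V : Type u} [Fintype V] (G : SimpleGraph V)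
    (hG : IsPermutationGraph G) (v : V) : IsPermutationGraph (seidelCompl G v) :=
  isPermutationGraph_seidelCompl_general G hG v
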